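/- arXiv:1507.01653 — 6 statements merged into one kernel-verified Lean document; each statement's English description precedes it below -/
import Mathlib

section
/- Let C be the Reed-Solomon code of dimension k over F_q with evaluation set D = {x_1,...,x_n}, n > k. If u ∈ F_q^n has interpolated polynomial u(x) of degree exactly k, then u is a deep hole, i.e., d(u, C) = n - k. -/
open Polynomial Finset

/-- If the interpolated polynomial `P` of a word `u` (so `u_i = P(x_i)`, `deg P ≤ n-1`)
has degree exactly `k`, then `u` is a deep hole of the Reed–Solomon code of dimension
`k`: its Hamming distance to the code is exactly `n - k`. -/
theorem reedSolomon_deg_k_is_deep_hole {F : Type*} [Field F] [Fintype F] [DecidableEq F]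
    (n k : ℕ) (hkn : k < n) (x : Fin n → F) (hx : Function.Injective x)
    (P : Polynomial F) (hPdeg : P.natDegree ≤ n - 1) (hPk : P.degree = (k : ℕ)) :
    IsLeast {d : ℕ | ∃ m : Polynomial F, m.degree < k ∧
        d = hammingDist (fun i => P.eval (x i)) (fun i => m.eval (x i))}
      (n - k) := by
  have hP0 : P ≠ 0 := fun h => by simp [h] at hPk
  constructor
  · -- membership: choose m = P - Q where Q = lead(P) * ∏_{i<k} (X - x i)
    set S : Finset (Fin n) := Finset.univ.filter (fun i : Fin n => (i : ℕ) < k) with hS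
    have hScard : S.card = k := by
      have : S = Finset.univ.image (Fin.castLE hkn.le) := by
        ext i
        simp only [hS, Finset.mem_filter, Finset.mem_univ, true_and, Finset.mem_image]
        constructor
        · intro hi; exact ⟨⟨i, hi⟩, by simp [Fin.ext_iff]⟩
        · rintro ⟨j, -, rfl⟩; exact j.isLt
      rw [this, Finset.card_image_of_injective _ (Fin.castLE_injective _)]
      simp
    set Q : Polynomial F := C P.leadingCoeff * ∏ i ∈ S, (X - C (x i)) with hQ
    have hlead : P.leadingCoeff ≠ 0 := leadingCoeff_ne_zero.mpr hP0
    have hmonic : (∏ i ∈ S, (X - C (x i))).Monic :=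
      monic_prod_of_monic _ _ fun i _ => monic_X_sub_C (x i)
    have hQdeg : Q.degree = (k : ℕ) := by
      rw [hQ, degree_C_mul hlead, degree_prod]
      simp only [degree_X_sub_C]
      rw [Finset.sum_const, hScard]
      simp
    have hQlead : Q.leadingCoeff = P.leadingCoeff := by
      rw [hQ, leadingCoeff_mul, leadingCoeff_C, hmonic.leadingCoeff, mul_one]
    refine ⟨P - Q, ?_, ?_⟩
    · have := degree_sub_lt (hPk.trans hQdeg.symm) hP0 (by rw [hQlead, leadingCoeff])
      calc (P - Q).degree < P.degree := this
        _ = (k : ℕ) := hPk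
    · have heq : ∀ i : Fin n, (P.eval (x i) = (P - Q).eval (x i)) ↔ (i : ℕ) < k := by
        intro i
        rw [eval_sub, eq_comm, sub_eq_self]
        simp only [hQ, eval_mul, eval_C, eval_prod, eval_sub, eval_X, mul_eq_zero,
          Finset.prod_eq_zero_iff, hlead, false_or, sub_eq_zero, hS, Finset.mem_filter,
          Finset.mem_univ, true_and]
        constructor
        · rintro ⟨j, hj, hij⟩; rwa [hx hij]
        · intro hi; exact ⟨i, hi, rfl⟩
      simp only [hammingDist, ne_eq]
      have hfilter : (Finset.univ.filter fun i : Fin n => ¬ P.eval (x i) = (P - Q).eval (x i))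
          = Finset.univ.filter fun i : Fin n => ¬ (i : ℕ) < k :=
        Finset.filter_congr fun i _ => by rw [heq i]
      rw [hfilter]
      have hsplit := Finset.card_filter_add_card_filter_not
        (s := (Finset.univ : Finset (Fin n))) (p := fun i : Fin n => (i : ℕ) < k)
      simp only [Finset.card_univ, Fintype.card_fin] at hsplit
      rw [← hS] at hsplit
      omega
  · -- lower bound
    rintro d ⟨m, hm, rfl⟩
    have hQ0 : P - m ≠ 0 := by
      intro h
      rw [sub_eq_zero] at h
      rw [← h, hPk] at hm
      exact lt_irrefl _ hm
    have hQdeg : (P - m).natDegree ≤ k := by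
      have : (P - m).degree ≤ (k : ℕ) := le_trans (degree_sub_le _ _) (by
        rw [hPk]; exact max_le le_rfl hm.le)
      exact natDegree_le_iff_degree_le.mpr this
    have key : (Finset.univ.filter fun i => P.eval (x i) = m.eval (x i)).card ≤ k := by
      calc (Finset.univ.filter fun i => P.eval (x i) = m.eval (x i)).card
          = ((Finset.univ.filter fun i => P.eval (x i) = m.eval (x i)).image x).card := by
            rw [Finset.card_image_of_injOn hx.injOn]
        _ ≤ (P - m).roots.toFinset.card := by
            apply Finset.card_le_card
            intro a ha
            simp only [Finset.mem_image, Finset.mem_filter, Finset.mem_univ, true_and] at ha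
            obtain ⟨i, hi, rfl⟩ := ha
            rw [Multiset.mem_toFinset, mem_roots hQ0]
            simp [IsRoot, sub_eq_zero, hi]
        _ ≤ Multiset.card (P - m).roots := (P - m).roots.toFinset_card_le
        _ ≤ (P - m).natDegree := (P - m).card_roots'
        _ ≤ k := hQdeg
    have hsplit := Finset.card_filter_add_card_filter_not
      (s := (Finset.univ : Finset (Fin n))) (p := fun i => P.eval (x i) = m.eval (x i))
    simp only [Finset.card_univ, Fintype.card_fin] at hsplit
    rw [hammingDist]
    simp only [ne_eq]
    omega
end

section
/- Let C be the Reed-Solomon code of dimension k over F_q with evaluation set D = {x_1,...,x_m} and let u be a word whose interpolated polynomial u(x) is monic of degree k+1. Then d(u, C) ≤ |D| - k - 1 if and only if there exist k+1 distinct elements y_1,...,y_{k+1} ∈ D and a polynomial v(x) of degree ≤ k-1 such that u(x) - v(x) = (x - y_1)(x - y_2)···(x - y_{k+1}). -/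
open Polynomial Finset

lemma aux_prod_eq {F : Type*} [Field F] [DecidableEq F] {m k : ℕ} {x : Fin m → F}
    (hx : Function.Injective x) {Q : Polynomial F} (hQ : Q.Monic)
    (hQdeg : Q.natDegree = k + 1) {s : Finset (Fin m)} (hs : s.card = k + 1)
    (hroot : ∀ i ∈ s, Q.eval (x i) = 0) :
    Q = ∏ i ∈ s, (Polynomial.X - Polynomial.C (x i)) := by
  have hQne : Q ≠ 0 := hQ.ne_zero
  have hpm : (∏ i ∈ s, (X - C (x i))).Monic :=
    monic_prod_of_monic _ _ fun i _ => monic_X_sub_C _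
  have hdvd : (∏ i ∈ s, (X - C (x i))) ∣ Q := by
    have hnodup : ((s.val.map x)).Nodup := Multiset.Nodup.map hx s.nodup
    have hle : s.val.map x ≤ Q.roots := by
      rw [Multiset.le_iff_subset hnodup]
      intro a ha
      obtain ⟨i, hi, rfl⟩ := Multiset.mem_map.mp ha
      exact (mem_roots hQne).mpr (hroot i hi)
    have h2 := (Multiset.prod_X_sub_C_dvd_iff_le_roots hQne (s.val.map x)).mpr hle
    rw [Multiset.map_map] at h2
    exact h2
  refine Polynomial.eq_of_monic_of_dvd_of_natDegree_le hpm hQ hdvd ?_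
  have : (∏ i ∈ s, (X - C (x i))).natDegree = k + 1 := by
    rw [natDegree_prod _ _ fun i _ => X_sub_C_ne_zero (x i)]
    simp [hs]
  omega

/-- For a word `u` whose interpolated polynomial `P` is monic of degree `k + 1`,
the distance from `u` to the Reed–Solomon code of dimension `k` on the evaluation set
`{x_1, …, x_m}` is at most `m - k - 1` iff `P - v` splits into `k + 1` distinct linear
factors over the evaluation set, for some `v` of degree `≤ k - 1`. -/
theorem reedSolomon_dist_le_iff_factors {F : Type*} [Field F] [Fintype F] [DecidableEq F]
    (m k : ℕ) (hkm : k + 1 ≤ m) (x : Fin m → F) (hx : Function.Injective x)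
    (P : Polynomial F) (hmonic : P.Monic) (hPdeg : P.natDegree = k + 1) :
    (∃ w : Polynomial F, w.degree < k ∧
        hammingDist (fun i => P.eval (x i)) (fun i => w.eval (x i)) ≤ m - k - 1) ↔
      ∃ s : Finset (Fin m), s.card = k + 1 ∧ ∃ v : Polynomial F, v.degree < k ∧
        P - v = ∏ i ∈ s, (Polynomial.X - Polynomial.C (x i)) := by
  have hPdegree : P.degree = (k + 1 : ℕ) := by
    rw [← hPdeg]; exact degree_eq_natDegree hmonic.ne_zero
  constructor
  · rintro ⟨w, hw, hd⟩
    have hwdeg : w.degree < P.degree := by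
      rw [hPdegree]
      exact hw.trans_le (by exact_mod_cast Nat.cast_le.mpr (Nat.le_succ k))
    have hQ : (P - w).Monic := hmonic.sub_of_left hwdeg
    have hQdeg : (P - w).natDegree = k + 1 := by
      have : (P - w).degree = (k + 1 : ℕ) := by
        rw [degree_sub_eq_left_of_degree_lt hwdeg, hPdegree]
      exact natDegree_eq_of_degree_eq_some this
    set A : Finset (Fin m) := {i | P.eval (x i) = w.eval (x i)} with hA
    have hcard : k + 1 ≤ A.card := by
      have h1 : hammingDist (fun i => P.eval (x i)) (fun i => w.eval (x i)) + A.card = m := by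
        rw [hammingDist, hA]
        have := Finset.card_filter_add_card_filter_not
          (s := (Finset.univ : Finset (Fin m)))
          (p := fun i => P.eval (x i) = w.eval (x i))
        simp only [Finset.card_univ, Fintype.card_fin] at this
        rw [Nat.add_comm] at this
        convert this using 3 <;> simp
      omega
    obtain ⟨s, hsA, hs⟩ := Finset.exists_subset_card_eq hcard
    refine ⟨s, hs, w, hw, aux_prod_eq hx hQ hQdeg hs fun i hi => ?_⟩
    have : P.eval (x i) = w.eval (x i) := by
      have := hsA hi
      simpa [hA] using this
    simp [this]
  · rintro ⟨s, hs, v, hv, heq⟩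
    refine ⟨v, hv, ?_⟩
    have hsub : ({i | P.eval (x i) ≠ v.eval (x i)} : Finset (Fin m)) ⊆ sᶜ := by
      intro i hi
      simp only [Finset.mem_filter, Finset.mem_univ, true_and, ne_eq] at hi
      rw [Finset.mem_compl]
      intro his
      apply hi
      have h0 : (P - v).eval (x i) = 0 := by
        rw [heq, eval_prod]
        exact Finset.prod_eq_zero his (by simp)
      rw [eval_sub, sub_eq_zero] at h0
      exact h0
    calc hammingDist (fun i => P.eval (x i)) (fun i => v.eval (x i))
        ≤ sᶜ.card := Finset.card_le_card hsub
      _ = m - (k + 1) := by rw [Finset.card_compl, hs]; simp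
      _ = m - k - 1 := by omega
end

section
/- Let k ≥ 1 and d ≥ 1 with q ≥ d ≥ 1 and s ≥ 0 real numbers (or with q ≥ s). Define C_k(t_1,...,t_k) = ∑_{∑ i·c_i = k} N(c_1,...,c_k) t_1^{c_1}···t_k^{c_k}, where N(c_1,...,c_k) is the number of permutations in S_k of cycle type (c_1,...,c_k). If t_i = q for d | i and t_i = s for d ∤ i, then C_k(t_1,...,t_k) = k! ∑_{i=0}^{⌊k/d⌋} \binom{(q-s)/d + i - 1}{i} \binom{s + k - d i - 1}{k - d i}. -/
/-- The full cycle type of a permutation of `Fin k` (fixed points counted as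
1-cycles). -/
def fullCycleType {k : ℕ} (σ : Equiv.Perm (Fin k)) : Multiset ℕ :=
  σ.cycleType + Multiset.replicate (k - σ.support.card) 1

/-- `N(c_1, …, c_k)`: the number of permutations in `S_k` whose cycle type is the
partition `P`. -/
noncomputable def permCountOfType {k : ℕ} (P : Nat.Partition k) : ℕ :=
  Nat.card {σ : Equiv.Perm (Fin k) // fullCycleType σ = P.parts}

/-- Generalised binomial coefficient with real upper argument, defined via the
falling factorial. -/
noncomputable def genBinom (x : ℝ) (i : ℕ) : ℝ :=
  (∏ j ∈ Finset.range i, (x - j)) / (i.factorial : ℝ)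

/-!
Write `C_n` for the weighted count of permutations of `n` points. Splitting off the cycle through a
given point gives `C_{n+1} = ∑_i n!/(n-i)! t_{i+1} C_{n-i}`, which says that the exponential
generating function `F = ∑ C_n Xⁿ/n!` solves `X F' = T F` with `T = ∑_{i ≥ 1} t_i Xⁱ`. For
`t_i = s + (q - s)·[d ∣ i]` the series `(1 - X)^{-s} (1 - X^d)^{-(q-s)/d}` solves the same equation
with the same constant term, and the solution is unique. Its coefficients are the right-hand side.
-/

section Permutations

open Finset Nat

namespace Equiv.Perm

section Subtype

variable {α : Type*} {p : α → Prop} [DecidablePred p] (a : Perm {x // p x})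
  (b : Perm {x // ¬p x})

theorem subtypeCongr_zpow (k : ℤ) : a.subtypeCongr b ^ k = (a ^ k).subtypeCongr (b ^ k) :=
  ((subtypeCongrHom p).map_zpow (a, b) k).symm

theorem sameCycle_subtypeCongr_iff {x y : α} (hx : p x) :
    (a.subtypeCongr b).SameCycle x y ↔ ∃ hy : p y, a.SameCycle ⟨x, hx⟩ ⟨y, hy⟩ := by
  simp only [SameCycle, subtypeCongr_zpow, subtypeCongr.left_apply _ _ hx]
  constructor
  · rintro ⟨k, rfl⟩
    exact ⟨(_ : {x // p x}).2, k, rfl⟩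
  · rintro ⟨hy, k, hk⟩
    exact ⟨k, by rw [hk]⟩

theorem subtypeCongr_eq_ofSubtype_mul : a.subtypeCongr b = ofSubtype a * ofSubtype b := by
  ext x
  by_cases hx : p x
  · rw [subtypeCongr.left_apply _ _ hx, mul_apply,
      ofSubtype_apply_of_not_mem b (not_not.mpr hx), ofSubtype_apply_of_mem a hx]
  · rw [subtypeCongr.right_apply _ _ hx, mul_apply, ofSubtype_apply_of_mem b hx,
      ofSubtype_apply_of_not_mem a (b ⟨x, hx⟩).2]

theorem disjoint_ofSubtype_ofSubtype : Disjoint (ofSubtype a) (ofSubtype b) := fun x => by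
  by_cases hx : p x
  · exact Or.inr (ofSubtype_apply_of_not_mem b (not_not.mpr hx))
  · exact Or.inl (ofSubtype_apply_of_not_mem a hx)

end Subtype

variable {α β : Type*} [Fintype α] [DecidableEq α] [Fintype β] [DecidableEq β]

theorem cycleType_permCongr (e : α ≃ β) (σ : Perm α) :
    (e.permCongr σ).cycleType = σ.cycleType := by
  have hext : e.permCongr σ =
      σ.extendDomain (e.trans (subtypeUnivEquiv fun _ => trivial).symm) := by
    ext b
    rw [extendDomain_apply_subtype _ _ trivial]
    simp [subtypeUnivEquiv]
  rw [hext, cycleType_extendDomain]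

theorem parts_partition_eq_cycleType_add (σ : Perm α) :
    σ.partition.parts =
      σ.cycleType + Multiset.replicate (Fintype.card α - σ.cycleType.sum) 1 := by
  rw [parts_partition, sum_cycleType]

section Subtype

variable {p : α → Prop} [DecidablePred p] [Fintype {x // p x}] [Fintype {x // ¬p x}]
  (a : Perm {x // p x}) (b : Perm {x // ¬p x})

theorem cycleType_subtypeCongr : (a.subtypeCongr b).cycleType = a.cycleType + b.cycleType := by
  rw [subtypeCongr_eq_ofSubtype_mul, (disjoint_ofSubtype_ofSubtype a b).cycleType_mul,
    cycleType_ofSubtype, cycleType_ofSubtype]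

theorem parts_partition_subtypeCongr :
    (a.subtypeCongr b).partition.parts = a.partition.parts + b.partition.parts := by
  have ha : a.cycleType.sum ≤ Fintype.card {x // p x} := by
    rw [sum_cycleType]; exact card_le_univ _
  have hb : b.cycleType.sum ≤ Fintype.card {x // ¬p x} := by
    rw [sum_cycleType]; exact card_le_univ _
  have hcard := Fintype.card_subtype_compl p
  have hle := Fintype.card_subtype_le p
  simp only [parts_partition_eq_cycleType_add, cycleType_subtypeCongr, Multiset.sum_add]
  rw [show Fintype.card α - (a.cycleType.sum + b.cycleType.sum) =
    (Fintype.card {x // p x} - a.cycleType.sum) + (Fintype.card {x // ¬p x} - b.cycleType.sum) by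
      omega, Multiset.replicate_add]
  abel

end Subtype

theorem cycleType_eq_singleton_card_iff [Nontrivial α] {σ : Perm α} :
    σ.cycleType = {Fintype.card α} ↔ ∀ x y, σ.SameCycle x y := by
  constructor
  · intro h x y
    have hcycle : σ.IsCycle := card_cycleType_eq_one.mp (by rw [h]; rfl)
    have hsupp : σ.support = univ := by
      apply eq_univ_of_card
      rw [← sum_cycleType, h, Multiset.sum_singleton]
    exact hcycle.sameCycle (mem_support.mp (hsupp ▸ mem_univ x))
      (mem_support.mp (hsupp ▸ mem_univ y))
  · intro h
    have hmoved (x : α) : σ x ≠ x := fun hx =>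
      let ⟨y, hy⟩ := exists_ne x
      hy ((h x y).eq_of_left hx).symm
    have hsupp : σ.support = univ := eq_univ_of_forall fun x => mem_support.mpr (hmoved x)
    obtain ⟨x⟩ := ‹Nontrivial α›.to_nonempty
    rw [IsCycle.cycleType ⟨x, hmoved x, fun y _ => h x y⟩, hsupp, Finset.card_univ]

theorem parts_partition_of_forall_sameCycle [Nonempty α] {σ : Perm α}
    (h : ∀ x y, σ.SameCycle x y) : σ.partition.parts = {Fintype.card α} := by
  rcases subsingleton_or_nontrivial α with hα | hα
  · rw [Subsingleton.elim σ 1, parts_partition, support_one, cycleType_one,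
      le_antisymm (Fintype.card_le_one_iff_subsingleton.mpr hα) Fintype.card_pos]
    rfl
  · rw [parts_partition_eq_cycleType_add, cycleType_eq_singleton_card_iff.mpr h]
    simp

theorem card_filter_forall_sameCycle [Nonempty α] :
    #{σ : Perm α | ∀ x y, σ.SameCycle x y} = (Fintype.card α - 1)! := by
  rcases subsingleton_or_nontrivial α with hα | hα
  · rw [filter_true_of_mem fun σ _ x y => (Subsingleton.elim x y).sameCycle σ, Finset.card_univ,
      Fintype.card_perm,
      le_antisymm (Fintype.card_le_one_iff_subsingleton.mpr hα) Fintype.card_pos]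
    rfl
  · simp_rw [← cycleType_eq_singleton_card_iff]
    rw [card_of_cycleType_singleton Fintype.one_lt_card le_rfl, choose_self, mul_one]

section CycleWeight

variable {R : Type*} [CommSemiring R] (t : ℕ → R)

/-- `t_1^{c_1} ⋯ t_k^{c_k}` for `σ` of type `(c_1, …, c_k)`. -/
def cycleWeight (σ : Perm α) : R := (σ.partition.parts.map t).prod

theorem cycleWeight_permCongr (e : α ≃ β) (σ : Perm α) :
    cycleWeight t (e.permCongr σ) = cycleWeight t σ := by
  simp only [cycleWeight, parts_partition_eq_cycleType_add, cycleType_permCongr,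
    Fintype.card_congr e]

theorem cycleWeight_subtypeCongr {p : α → Prop} [DecidablePred p] [Fintype {x // p x}]
    [Fintype {x // ¬p x}] (a : Perm {x // p x}) (b : Perm {x // ¬p x}) :
    cycleWeight t (a.subtypeCongr b) = cycleWeight t a * cycleWeight t b := by
  rw [cycleWeight, parts_partition_subtypeCongr, Multiset.map_add, Multiset.prod_add]; rfl

theorem cycleWeight_of_forall_sameCycle [Nonempty α] {σ : Perm α}
    (h : ∀ x y, σ.SameCycle x y) :
    cycleWeight t σ = t (Fintype.card α) := by
  rw [cycleWeight, parts_partition_of_forall_sameCycle h, Multiset.map_singleton,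
    Multiset.prod_singleton]

/-- The permutations whose cycle through `x` has support `A` are the `a.subtypeCongr b` with `a`
a cyclic permutation of `A` and `b` arbitrary. -/
theorem sum_cycleWeight_filter_sameCycle_eq {x : α} {A : Finset α} (hx : x ∈ A) :
    ∑ σ : Perm α with ({y | σ.SameCycle x y} : Finset α) = A, cycleWeight t σ =
      (#A - 1)! * (t #A * ∑ b : Perm {y // y ∉ A}, cycleWeight t b) := by
  have : Nonempty {y // y ∈ A} := ⟨⟨x, hx⟩⟩
  set T : Finset (Perm {y // y ∈ A}) := {a | ∀ y z, a.SameCycle y z}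
  symm
  calc (#A - 1)! * (t #A * ∑ b : Perm {y // y ∉ A}, cycleWeight t b)
      = ∑ a ∈ T, t #A * ∑ b : Perm {y // y ∉ A}, cycleWeight t b := by
        rw [sum_const, card_filter_forall_sameCycle, Fintype.card_coe, nsmul_eq_mul]
    _ = ∑ ab ∈ T ×ˢ univ, cycleWeight t ab.1 * cycleWeight t ab.2 := by
        rw [sum_product' (f := fun (a : Perm {y // y ∈ A}) (b : Perm {y // y ∉ A}) =>
          cycleWeight t a * cycleWeight t b)]
        refine sum_congr rfl fun a ha => ?_
        rw [cycleWeight_of_forall_sameCycle t (mem_filter.mp ha).2, Fintype.card_coe, mul_sum]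
    _ = ∑ σ : Perm α with ({y | σ.SameCycle x y} : Finset α) = A, cycleWeight t σ := by
        refine sum_nbij (fun ab => ab.1.subtypeCongr ab.2) ?_
          (fun ab _ ab' _ h => subtypeCongrHom_injective _ h) ?_
          (fun ab _ => (cycleWeight_subtypeCongr t ab.1 ab.2).symm)
        · rintro ⟨a, b⟩ hab
          have ha := (mem_filter.mp (mem_product.mp hab).1).2
          refine mem_filter.mpr ⟨mem_univ _, ?_⟩
          ext y
          rw [mem_filter, sameCycle_subtypeCongr_iff a b hx]
          exact ⟨fun ⟨_, hy, _⟩ => hy, fun hy => ⟨mem_univ _, hy, ha _ _⟩⟩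
        · intro σ hσ
          have hmem (y : α) : y ∈ A ↔ σ.SameCycle x y := by
            rw [← (mem_filter.mp hσ).2]; simp
          have hA (y : α) : σ y ∈ A ↔ y ∈ A := by rw [hmem, hmem, sameCycle_apply_right]
          have hAc (y : α) : σ y ∉ A ↔ y ∉ A := (hA y).not
          refine ⟨(σ.subtypePerm hA, σ.subtypePerm hAc), mem_product.mpr
            ⟨mem_filter.mpr ⟨mem_univ _, fun y z => ?_⟩, mem_univ _⟩, ?_⟩
          · exact (((hmem y).mp y.2).symm.trans ((hmem z).mp z.2)).subtypePerm (h := hA)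
          · ext y
            by_cases hy : y ∈ A <;> simp [hy]

end CycleWeight

end Equiv.Perm

section PermCycleSum

open Equiv Equiv.Perm

variable {R : Type*} [CommSemiring R] (t : ℕ → R)

/-- The paper's `C_n(t_1, …, t_n)`. -/
def permCycleSum (n : ℕ) : R := ∑ σ : Perm (Fin n), cycleWeight t σ

theorem sum_cycleWeight_eq_permCycleSum (α : Type*) [Fintype α] [DecidableEq α] :
    ∑ σ : Perm α, cycleWeight t σ = permCycleSum t (Fintype.card α) :=
  Fintype.sum_equiv (Fintype.equivFin α).permCongr _ _ fun σ =>
    (cycleWeight_permCongr t _ σ).symm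

theorem sum_cycleWeight_eq_sum_powerset {α : Type*} [Fintype α] [DecidableEq α] (x : α) :
    ∑ σ : Perm α, cycleWeight t σ = ∑ B ∈ (univ.erase x).powerset,
      (#B)! * (t (#B + 1) * permCycleSum t (Fintype.card α - (#B + 1))) := by
  rw [← sum_fiberwise_of_maps_to
    (g := fun σ : Perm α => ({y | σ.SameCycle x y} : Finset α).erase x)
    fun σ _ => mem_powerset.mpr (erase_subset_erase _ (subset_univ _))]
  refine sum_congr rfl fun B hB => ?_
  have hxB : x ∉ B := fun h => (mem_erase.mp (mem_powerset.mp hB h)).1 rfl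
  have hfiber : ∀ σ : Perm α, ({y | σ.SameCycle x y} : Finset α).erase x = B ↔
      ({y | σ.SameCycle x y} : Finset α) = insert x B := fun σ =>
    ⟨fun h => by rw [← h, insert_erase (mem_filter.mpr ⟨mem_univ _, .refl σ x⟩)],
      fun h => by rw [h, erase_insert hxB]⟩
  rw [sum_congr (filter_congr fun σ _ => hfiber σ) fun _ _ => rfl,
    sum_cycleWeight_filter_sameCycle_eq t (mem_insert_self x B), card_insert_of_notMem hxB,
    Nat.add_sub_cancel, sum_cycleWeight_eq_permCycleSum, Fintype.card_subtype_compl,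
    Fintype.card_coe, card_insert_of_notMem hxB]

theorem permCycleSum_zero : permCycleSum t 0 = 1 := by
  simp [permCycleSum, cycleWeight, parts_partition]

theorem permCycleSum_succ (n : ℕ) : permCycleSum t (n + 1) =
    ∑ i ∈ range (n + 1), n.choose i • (i ! * (t (i + 1) * permCycleSum t (n - i))) := by
  rw [permCycleSum, sum_cycleWeight_eq_sum_powerset t 0, Fintype.card_fin,
    sum_powerset_apply_card (fun i => i ! * (t (i + 1) * permCycleSum t (n + 1 - (i + 1)))),
    card_erase_of_mem (mem_univ _), Finset.card_univ, Fintype.card_fin, Nat.add_sub_cancel]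
  simp only [Nat.add_sub_add_right]


theorem sum_permCountOfType_mul_prod (k : ℕ) :
    ∑ P : k.Partition, (permCountOfType P : R) * (P.parts.map t).prod = permCycleSum t k := by
  have hparts (σ : Perm (Fin k)) : fullCycleType σ = σ.partition.parts := by
    rw [fullCycleType, parts_partition, Fintype.card_fin]
  let toPartition (σ : Perm (Fin k)) : k.Partition :=
    ⟨fullCycleType σ, fun hi => σ.partition.parts_pos (hparts σ ▸ hi), by
      rw [hparts, σ.partition.parts_sum, Fintype.card_fin]⟩
  rw [permCycleSum, ← sum_fiberwise_of_maps_to (g := toPartition) fun _ _ => mem_univ _]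
  refine sum_congr rfl fun P _ => ?_
  rw [sum_congr rfl fun σ hσ => show cycleWeight t σ = (P.parts.map t).prod by
      rw [cycleWeight, ← hparts, ← (mem_filter.mp hσ).2],
    sum_const, nsmul_eq_mul, permCountOfType, Nat.card_eq_fintype_card, Fintype.card_subtype]
  congr 3
  ext σ
  simp [toPartition, Nat.Partition.ext_iff]

end PermCycleSum

end Permutations

namespace PowerSeries

section CommSemiring

variable {R : Type*} [CommSemiring R]

theorem coeff_X_mul_derivative (f : R⟦X⟧) (n : ℕ) :
    coeff n (X * d⁄dX R f) = n * coeff n f := by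
  cases n with
  | zero => simp
  | succ n => rw [coeff_succ_X_mul, coeff_derivative, mul_comm]; push_cast; rfl

theorem X_mul_derivative_mul (f g : R⟦X⟧) :
    X * d⁄dX R (f * g) = (X * d⁄dX R f) * g + f * (X * d⁄dX R g) := by
  rw [Derivation.leibniz, smul_eq_mul, smul_eq_mul]; ring

theorem coeff_X_mul_mk_one (n : ℕ) : coeff n (X * mk 1 : R⟦X⟧) = if n = 0 then 0 else 1 := by
  cases n <;> simp [coeff_succ_X_mul]

end CommSemiring

section CommRing

variable {R : Type*} [CommRing R]

theorem one_sub_X_ne_zero [Nontrivial R] : (1 - X : R⟦X⟧) ≠ 0 := fun h => by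
  simpa using congrArg constantCoeff h

theorem X_mul_derivative_expand (p : ℕ) (hp : p ≠ 0) (f : R⟦X⟧) :
    X * d⁄dX R (expand p hp f) = (p : R⟦X⟧) * expand p hp (X * d⁄dX R f) := by
  ext n
  rw [coeff_X_mul_derivative, ← map_natCast (C (R := R)), coeff_C_mul, coeff_expand, coeff_expand]
  split_ifs with h
  · obtain ⟨m, rfl⟩ := h
    rw [Nat.mul_div_cancel_left _ (Nat.pos_of_ne_zero hp), coeff_X_mul_derivative]
    push_cast; ring
  · simp

theorem coeff_mul_expand (p : ℕ) (hp : p ≠ 0) (f g : R⟦X⟧) (n : ℕ) :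
    coeff n (f * expand p hp g) =
      ∑ i ∈ Finset.range (n / p + 1), coeff i g * coeff (n - p * i) f := by
  have hp' : 0 < p := Nat.pos_of_ne_zero hp
  set F : ℕ → R := fun k => coeff k (expand p hp g) * coeff (n - k) f
  rw [mul_comm, coeff_mul, Finset.Nat.sum_antidiagonal_eq_sum_range_succ
    (fun i j => coeff i (expand p hp g) * coeff j f)]
  simp_rw [← coeff_expand_mul p hp g]
  rw [← Finset.sum_image (f := F) (g := (p * ·))
    fun i _ j _ h => Nat.eq_of_mul_eq_mul_left hp' h]
  symm
  apply Finset.sum_subset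
  · intro k hk
    obtain ⟨i, hi, rfl⟩ := Finset.mem_image.mp hk
    rw [Finset.mem_range, Nat.lt_succ_iff, Nat.le_div_iff_mul_le hp'] at hi
    rw [Finset.mem_range, Nat.lt_succ_iff, mul_comm]
    exact hi
  · intro k hk hk'
    simp only [F]
    rw [coeff_expand_of_not_dvd, zero_mul]
    rintro ⟨i, rfl⟩
    refine hk' (Finset.mem_image.mpr ⟨i, ?_, rfl⟩)
    rw [Finset.mem_range, Nat.lt_succ_iff] at hk ⊢
    rw [Nat.le_div_iff_mul_le hp', mul_comm]
    exact hk

theorem eq_of_X_mul_derivative_eq [IsDomain R] [CharZero R] {t f g : R⟦X⟧}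
    (ht : constantCoeff t = 0) (hf : X * d⁄dX R f = t * f) (hg : X * d⁄dX R g = t * g)
    (h0 : constantCoeff f = constantCoeff g) : f = g := by
  ext n
  induction n using Nat.strong_induction_on with
  | _ n ih =>
  rcases Nat.eq_zero_or_pos n with rfl | hn
  · simpa using h0
  have key : (n : R) * coeff n f = n * coeff n g := by
    rw [← coeff_X_mul_derivative, ← coeff_X_mul_derivative, hf, hg, coeff_mul, coeff_mul]
    refine Finset.sum_congr rfl fun ij hij => ?_
    rcases Nat.eq_zero_or_pos ij.1 with h | h
    · simp [h, ht]
    · rw [ih ij.2 (by have := Finset.HasAntidiagonal.mem_antidiagonal.mp hij; omega)]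
  exact mul_left_cancel₀ (Nat.cast_ne_zero.mpr hn.ne') key

theorem X_mul_mk_ite_dvd (p : ℕ) (hp : p ≠ 0) (a b : R) :
    (X * mk fun i => if p ∣ i + 1 then a else b) =
      C b * (X * mk 1) + C (a - b) * expand p hp (X * mk 1) := by
  ext n
  rw [map_add, coeff_C_mul, coeff_C_mul, coeff_X_mul_mk_one, coeff_expand]
  cases n with
  | zero => simp
  | succ n =>
    rw [coeff_succ_X_mul, coeff_mk, coeff_X_mul_mk_one, if_neg n.succ_ne_zero]
    by_cases h : p ∣ n + 1
    · rw [if_pos h, if_pos h, if_neg (Nat.div_pos (Nat.le_of_dvd n.succ_pos h)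
        (Nat.pos_of_ne_zero hp)).ne']
      ring
    · rw [if_neg h, if_neg h]
      ring

end CommRing

end PowerSeries

section Series

open Nat PowerSeries

theorem genBinom_succ (x : ℝ) (n : ℕ) :
    (n + 1) * genBinom (x + 1) (n + 1) = (x + 1) * genBinom x n := by
  have hprod :
      ∏ j ∈ Finset.range (n + 1), (x + 1 - j) = (x + 1) * ∏ j ∈ Finset.range n, (x - j) := by
    rw [Finset.prod_range_succ', mul_comm]
    push_cast
    simp only [sub_zero, add_sub_add_right_eq_sub]
  rw [genBinom, genBinom, hprod, factorial_succ]
  push_cast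
  field_simp

/-- `(1 - X)^{-u}`. -/
noncomputable def negBinomialSeries (u : ℝ) : ℝ⟦X⟧ := mk fun n => genBinom (u + n - 1) n

theorem X_mul_derivative_negBinomialSeries (u : ℝ) :
    X * d⁄dX ℝ (negBinomialSeries u) = C u * (X * mk 1) * negBinomialSeries u := by
  -- After multiplying by `1 - X` this is the recurrence `(n + 1) a_{n+1} = (u + n) a_n`.
  refine mul_left_cancel₀ one_sub_X_ne_zero ?_
  rw [show (1 - X) * (C u * (X * mk 1) * negBinomialSeries u) =
      C u * X * negBinomialSeries u * (mk 1 * (1 - X)) by ring, mk_one_mul_one_sub_eq_one, mul_one]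
  ext n
  cases n with
  | zero => simp
  | succ n =>
    rw [sub_mul, one_mul, map_sub, coeff_succ_X_mul n (X * _), coeff_X_mul_derivative,
      coeff_X_mul_derivative, mul_assoc, coeff_C_mul, coeff_succ_X_mul]
    simp only [negBinomialSeries, coeff_mk]
    have := genBinom_succ (u + n - 1) n
    rw [show u + n - 1 + 1 = u + (n + 1 : ℕ) - 1 by push_cast; ring] at this
    push_cast at this ⊢
    linarith

theorem X_mul_derivative_negBinomialSeries_mul_expand (s u : ℝ) (d : ℕ) (hd : d ≠ 0) :
    X * d⁄dX ℝ (negBinomialSeries s * expand d hd (negBinomialSeries u)) =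
      (C s * (X * mk 1) + C (d * u) * expand d hd (X * mk 1)) *
        (negBinomialSeries s * expand d hd (negBinomialSeries u)) := by
  rw [X_mul_derivative_mul, X_mul_derivative_expand, X_mul_derivative_negBinomialSeries,
    X_mul_derivative_negBinomialSeries, map_mul (expand d hd) (C u * (X * mk 1)),
    map_mul (expand d hd) (C u), expand_C, map_mul C, ← map_natCast C]
  ring

noncomputable def permCycleEGF {K : Type*} [Field K] (t : ℕ → K) : K⟦X⟧ :=
  mk fun n => permCycleSum t n / n !

theorem X_mul_derivative_permCycleEGF {K : Type*} [Field K] [CharZero K] (t : ℕ → K) :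
    X * d⁄dX K (permCycleEGF t) = (X * mk fun i => t (i + 1)) * permCycleEGF t := by
  rw [permCycleEGF]
  ext n
  cases n with
  | zero => simp [coeff_X_mul_derivative]
  | succ n =>
    rw [coeff_X_mul_derivative, coeff_mk, coeff_mul, Finset.Nat.sum_antidiagonal_succ]
    simp only [coeff_zero_X_mul, zero_mul, zero_add, coeff_succ_X_mul, coeff_mk]
    rw [Finset.Nat.sum_antidiagonal_eq_sum_range_succ_mk, permCycleSum_succ, Finset.sum_div,
      Finset.mul_sum]
    refine Finset.sum_congr rfl fun i hi => ?_
    have hin := Nat.lt_succ_iff.mp (Finset.mem_range.mp hi)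
    have hc : (n.choose i : K) ≠ 0 := Nat.cast_ne_zero.mpr (Nat.choose_pos hin).ne'
    have hf : (i ! : K) ≠ 0 := Nat.cast_ne_zero.mpr i.factorial_ne_zero
    rw [factorial_succ, ← Nat.choose_mul_factorial_mul_factorial hin, nsmul_eq_mul]
    push_cast
    field_simp

theorem permCycleEGF_ite_dvd (d : ℕ) (hd : d ≠ 0) (q s : ℝ) :
    permCycleEGF (fun i => if d ∣ i then q else s) =
      negBinomialSeries s * expand d hd (negBinomialSeries ((q - s) / d)) := by
  refine eq_of_X_mul_derivative_eq (by simp) (X_mul_derivative_permCycleEGF _) ?_ ?_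
  · rw [X_mul_mk_ite_dvd d hd q s, X_mul_derivative_negBinomialSeries_mul_expand,
      mul_div_cancel₀ _ (Nat.cast_ne_zero.mpr hd)]
  · simp [permCycleEGF, permCycleSum_zero, negBinomialSeries, genBinom]

end Series

theorem liWan_cycle_type_sum_eq_general (k d : ℕ) (hd : 1 ≤ d) (q s : ℝ) :
    (∑ P : Nat.Partition k, (permCountOfType P : ℝ) *
        (P.parts.map (fun i => if d ∣ i then q else s)).prod) =
      (k.factorial : ℝ) * ∑ i ∈ Finset.range (k / d + 1),
        genBinom ((q - s) / d + i - 1) i *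
          genBinom (s + (k : ℝ) - d * i - 1) (k - d * i) := by
  have hd0 : d ≠ 0 := by omega
  have hcoeff := congrArg (PowerSeries.coeff k) (permCycleEGF_ite_dvd d hd0 q s)
  rw [permCycleEGF, PowerSeries.coeff_mk, PowerSeries.coeff_mul_expand,
    div_eq_iff (by positivity)] at hcoeff
  rw [sum_permCountOfType_mul_prod, hcoeff, mul_comm]
  congr 1
  refine Finset.sum_congr rfl fun i hi => ?_
  have hdi : d * i ≤ k := by
    rw [mul_comm, ← Nat.le_div_iff_mul_le (by omega), ← Nat.lt_succ_iff, ← Finset.mem_range]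
    exact hi
  simp only [negBinomialSeries, PowerSeries.coeff_mk, Nat.cast_sub hdi]
  push_cast
  ring_nf

/-- Li–Wan combinatorial identity: if `t_i = q` when `d ∣ i` and `t_i = s`
otherwise, then `C_k(t_1, …, t_k) = k! ∑_{i=0}^{⌊k/d⌋} C((q-s)/d + i - 1, i) ·
C(s + k - d·i - 1, k - d·i)`. -/
theorem liWan_cycle_type_sum_eq (k d : ℕ) (hk : 1 ≤ k) (hd : 1 ≤ d) (q s : ℝ)
    (hs : 0 ≤ s) (hsq : s ≤ q) (hdq : (d : ℝ) ≤ q) :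
    (∑ P : Nat.Partition k, (permCountOfType P : ℝ) *
        (P.parts.map (fun i => if d ∣ i then q else s)).prod) =
      (k.factorial : ℝ) * ∑ i ∈ Finset.range (k / d + 1),
        genBinom ((q - s) / d + i - 1) i *
          genBinom (s + (k : ℝ) - d * i - 1) (k - d * i) :=
  liWan_cycle_type_sum_eq_general k d hd q s
end

section
/- Let X be a symmetric subset of D^k (closed under the S_k-action permuting coordinates) and f : X → C a normal function (meaning ∑_{x ∈ X_τ} f(x) depends only on the conjugacy class of τ ∈ S_k, where X_τ is the set of tuples constant on each cycle of τ). Then ∑_{x ∈ X, coordinates pairwise distinct} f(x) = ∑_{∑ i c_i = k} (-1)^{k - ∑ c_i} N(c_1,...,c_k) F_τ, where F_τ = ∑_{x ∈ X_τ} f(x) for any τ of type (c_1,...,c_k). -/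
lemma fullCycleType_sum {k : ℕ} (σ : Equiv.Perm (Fin k)) :
    (fullCycleType σ).sum = k := by
  have h1 : σ.cycleType.sum = σ.support.card := Equiv.Perm.sum_cycleType σ
  have h2 : σ.support.card ≤ k := by
    simpa using Finset.card_le_univ σ.support
  simp only [fullCycleType, Multiset.sum_add, Multiset.sum_replicate, smul_eq_mul, mul_one, h1]
  omega

lemma fullCycleType_pos {k : ℕ} (σ : Equiv.Perm (Fin k)) :
    ∀ {i : ℕ}, i ∈ fullCycleType σ → 0 < i := by
  intro i hi
  rcases Multiset.mem_add.mp hi with h | h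
  · exact lt_of_lt_of_le two_pos (Equiv.Perm.two_le_of_mem_cycleType h)
  · simp [Multiset.eq_of_mem_replicate h]

/-- The full cycle type as a partition of `k`. -/
def partitionOf {k : ℕ} (σ : Equiv.Perm (Fin k)) : Nat.Partition k :=
  ⟨fullCycleType σ, fullCycleType_pos σ, fullCycleType_sum σ⟩

lemma cycleType_eq_filter {k : ℕ} (σ : Equiv.Perm (Fin k)) :
    (fullCycleType σ).filter (fun n => 2 ≤ n) = σ.cycleType := by
  rw [fullCycleType, Multiset.filter_add]
  have h1 : σ.cycleType.filter (fun n => 2 ≤ n) = σ.cycleType :=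
    Multiset.filter_eq_self.mpr (fun a ha => Equiv.Perm.two_le_of_mem_cycleType ha)
  have h2 : (Multiset.replicate (k - σ.support.card) 1).filter (fun n => 2 ≤ n) = 0 := by
    rw [Multiset.filter_eq_nil]
    intro a ha
    rw [Multiset.eq_of_mem_replicate ha]
    omega
  rw [h1, h2, add_zero]

lemma isConj_of_fullCycleType_eq {k : ℕ} {σ τ : Equiv.Perm (Fin k)}
    (h : fullCycleType σ = fullCycleType τ) : IsConj σ τ := by
  rw [Equiv.Perm.isConj_iff_cycleType_eq, ← cycleType_eq_filter σ, ← cycleType_eq_filter τ, h]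

lemma sign_eq_pow {k : ℕ} (σ : Equiv.Perm (Fin k)) :
    ((Equiv.Perm.sign σ : ℤ) : ℂ) = (-1 : ℂ) ^ (k - Multiset.card (fullCycleType σ)) := by
  have hs : σ.cycleType.sum = σ.support.card := Equiv.Perm.sum_cycleType σ
  have h2 : σ.support.card ≤ k := by simpa using Finset.card_le_univ σ.support
  have hcle : Multiset.card σ.cycleType ≤ σ.cycleType.sum := by
    have h1 : ∀ x ∈ σ.cycleType, 1 ≤ x :=
      fun x hx => le_trans (by norm_num) (Equiv.Perm.two_le_of_mem_cycleType hx)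
    generalize σ.cycleType = s at h1 ⊢
    induction s using Multiset.induction with
    | empty => simp
    | cons a t ih =>
      simp only [Multiset.card_cons, Multiset.sum_cons]
      have ha := h1 a (Multiset.mem_cons_self a t)
      have := ih (fun x hx => h1 x (Multiset.mem_cons_of_mem hx))
      omega
  have hcard : Multiset.card (fullCycleType σ)
      = Multiset.card σ.cycleType + (k - σ.support.card) := by
    simp [fullCycleType]
  have hk : k - Multiset.card (fullCycleType σ)
      = σ.cycleType.sum - Multiset.card σ.cycleType := by omega
  have hsign := Equiv.Perm.sign_of_cycleType σ
  have : ((Equiv.Perm.sign σ : ℤ) : ℂ)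
      = (-1 : ℂ) ^ (σ.cycleType.sum + Multiset.card σ.cycleType) := by
    rw [hsign]; push_cast; ring_nf
  rw [this, hk]
  have : σ.cycleType.sum + Multiset.card σ.cycleType
      = (σ.cycleType.sum - Multiset.card σ.cycleType) + 2 * Multiset.card σ.cycleType := by
    omega
  rw [this, pow_add]
  simp [pow_mul]

lemma comp_swap_eq {D : Type*} {k : ℕ} [DecidableEq (Fin k)] (x : Fin k → D) {i j : Fin k}
    (hij : x i = x j) : x ∘ Equiv.swap i j = x := by
  funext a
  simp only [Function.comp_apply, Equiv.swap_apply_def]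
  split_ifs with h1 h2 <;> simp_all

lemma signSum {D : Type*} [DecidableEq D] {k : ℕ} (x : Fin k → D) :
    ∑ σ ∈ Finset.univ.filter (fun σ : Equiv.Perm (Fin k) => x ∘ σ = x),
      ((Equiv.Perm.sign σ : ℤ) : ℂ)
      = if Function.Injective x then 1 else 0 := by
  by_cases hinj : Function.Injective x
  · have : Finset.univ.filter (fun σ : Equiv.Perm (Fin k) => x ∘ σ = x) = {1} := by
      ext σ
      simp only [Finset.mem_filter, Finset.mem_univ, true_and, Finset.mem_singleton]
      constructor
      · intro h
        ext a
        exact congrArg _ (hinj (congrFun h a))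
      · rintro rfl; rfl
    rw [this]
    simp [hinj]
  · rw [if_neg hinj]
    obtain ⟨i, j, hx, hij⟩ := Function.not_injective_iff.mp hinj
    apply Finset.sum_involution (fun σ _ => σ * Equiv.swap i j)
    · intro σ hσ
      simp only [map_mul, Equiv.Perm.sign_swap hij]
      push_cast
      ring
    · intro σ hσ _
      intro h
      have : Equiv.swap i j = 1 := by
        calc Equiv.swap i j = σ⁻¹ * (σ * Equiv.swap i j) := by group
          _ = σ⁻¹ * σ := by rw [h]
          _ = 1 := by group
      exact hij (Equiv.swap_eq_refl_iff.mp this)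
    · intro σ hσ
      simp only [Finset.mem_filter, Finset.mem_univ, true_and] at hσ ⊢
      have : x ∘ (σ * Equiv.swap i j) = (x ∘ σ) ∘ Equiv.swap i j := rfl
      rw [this, hσ, comp_swap_eq x hx]
    · intro σ hσ
      simp [mul_assoc]

/-- Li–Wan's new sieve: for a symmetric `X ⊆ D^k` and a normal function `f` on `X`,
the sum of `f` over tuples with pairwise distinct coordinates equals
`∑_{∑ i·c_i = k} (-1)^{k - ∑ c_i} N(c_1, …, c_k) F_τ`, where `F_τ = ∑_{x ∈ X_τ} f(x)`
for any `τ` of cycle type `(c_1, …, c_k)`. -/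
theorem liWan_sieve {D : Type*} [Fintype D] [DecidableEq D] (k : ℕ)
    (X : Finset (Fin k → D))
    (hsym : ∀ σ : Equiv.Perm (Fin k), ∀ x ∈ X, x ∘ σ ∈ X)
    (f : (Fin k → D) → ℂ)
    (hnormal : ∀ τ τ' : Equiv.Perm (Fin k), IsConj τ τ' →
      ∑ x ∈ X.filter (fun x => x ∘ τ = x), f x =
        ∑ x ∈ X.filter (fun x => x ∘ τ' = x), f x)
    (T : Nat.Partition k → Equiv.Perm (Fin k))
    (hT : ∀ P, fullCycleType (T P) = P.parts) :
    ∑ x ∈ X.filter (fun x => Function.Injective x), f x =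
      ∑ P : Nat.Partition k,
        (-1 : ℂ) ^ (k - Multiset.card P.parts) * (permCountOfType P : ℂ) *
          ∑ x ∈ X.filter (fun x => x ∘ (T P) = x), f x := by
  classical
  have step1 : ∑ x ∈ X.filter (fun x => Function.Injective x), f x
      = ∑ σ : Equiv.Perm (Fin k), ((Equiv.Perm.sign σ : ℤ) : ℂ) *
          ∑ x ∈ X.filter (fun x => x ∘ σ = x), f x := by
    rw [Finset.sum_filter]
    have : ∀ x ∈ X, (if Function.Injective x then f x else 0)
        = ∑ σ : Equiv.Perm (Fin k),
            (if x ∘ σ = x then ((Equiv.Perm.sign σ : ℤ) : ℂ) * f x else 0) := by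
      intro x _
      have := signSum (D := D) (k := k) x
      rw [← Finset.sum_filter]
      calc (if Function.Injective x then f x else 0)
          = (if Function.Injective x then (1:ℂ) else 0) * f x := by split_ifs <;> simp
        _ = (∑ σ ∈ Finset.univ.filter (fun σ : Equiv.Perm (Fin k) => x ∘ σ = x),
              ((Equiv.Perm.sign σ : ℤ) : ℂ)) * f x := by rw [this]
        _ = _ := by rw [Finset.sum_mul]
    rw [Finset.sum_congr rfl this, Finset.sum_comm]
    apply Finset.sum_congr rfl
    intro σ _
    rw [Finset.mul_sum, Finset.sum_filter]
  rw [step1, ← Finset.sum_fiberwise Finset.univ partitionOf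
    (fun σ => ((Equiv.Perm.sign σ : ℤ) : ℂ) * ∑ x ∈ X.filter (fun x => x ∘ σ = x), f x)]
  apply Finset.sum_congr rfl
  intro P _
  have hfix : ∀ σ ∈ Finset.univ.filter (fun σ : Equiv.Perm (Fin k) => partitionOf σ = P),
      ((Equiv.Perm.sign σ : ℤ) : ℂ) * ∑ x ∈ X.filter (fun x => x ∘ σ = x), f x
        = (-1 : ℂ) ^ (k - Multiset.card P.parts) *
            ∑ x ∈ X.filter (fun x => x ∘ (T P) = x), f x := by
    intro σ hσ
    simp only [Finset.mem_filter, Finset.mem_univ, true_and] at hσ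
    have hfull : fullCycleType σ = P.parts := by rw [← hσ]; rfl
    have h1 : ((Equiv.Perm.sign σ : ℤ) : ℂ) = (-1 : ℂ) ^ (k - Multiset.card P.parts) := by
      rw [sign_eq_pow, hfull]
    have h2 : IsConj σ (T P) := isConj_of_fullCycleType_eq (by rw [hfull, hT])
    rw [h1, hnormal σ (T P) h2]
  rw [Finset.sum_congr rfl hfix, Finset.sum_const]
  have hcard : (Finset.univ.filter (fun σ : Equiv.Perm (Fin k) => partitionOf σ = P)).card
      = permCountOfType P := by
    rw [permCountOfType, Nat.card_eq_fintype_card, Fintype.card_subtype]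
    congr 1
    apply Finset.filter_congr
    intro σ _
    constructor
    · intro h; rw [← h]; rfl
    · intro h; exact Nat.Partition.ext h
  rw [hcard]
  push_cast
  ring
end

section
/- Let f : D → C be a function on a finite set D and k ≥ 1. Then ∑ over tuples (x_1,...,x_k) ∈ D^k with pairwise distinct coordinates of f(x_1)f(x_2)···f(x_k) equals ∑_{∑ i c_i = k} (-1)^{k - ∑ c_i} N(c_1,...,c_k) ∏_{i=1}^k (∑_{x∈D} f(x)^i)^{c_i}, where N(c_1,...,c_k) is the number of permutations in S_k with cycle type (c_1,...,c_k). -/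
/-!
Summing the sign of `σ ∈ S_k` over the stabiliser of a tuple `x ∈ D^k` gives `1` if `x` is injective
and `0` otherwise (a transposition of two equal coordinates pairs the stabiliser off into
permutations of opposite signs). Hence the sum over injective tuples is
`∑_σ sign σ · ∑_{x ∘ σ = x} ∏ᵢ f (xᵢ)`. A tuple fixed by σ is a function on the cycles of σ, so the
inner sum factors as `∏_{cycles c} p_{|c|}` with `p_m = ∑_y f(y)^m`, and
`sign σ = (-1)^(k - #cycles)`. Grouping permutations by cycle type gives the formula.
-/

open Equiv Finset Function

theorem sum_prod_comp_eq_prod_sum_pow_card_fiber {ι κ D R : Type*} [Fintype ι] [Fintype κ]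
    [DecidableEq κ] [Fintype D] [CommSemiring R] (π : ι → κ) (f : D → R) :
    ∑ g : κ → D, ∏ i, f (g (π i)) = ∏ q, ∑ y, f y ^ #{i | π i = q} := by
  rw [Fintype.prod_sum]
  refine Fintype.sum_congr _ _ fun g => ?_
  rw [← prod_fiberwise' univ π (fun q => f (g q))]
  exact Fintype.prod_congr _ _ fun q => prod_const _

namespace Equiv.Perm

variable {α : Type*}

theorem SameCycle.apply_eq_of_invariant {D : Type*} [Finite α] {σ : Perm α} {x : α → D}
    (hx : ∀ i, x (σ i) = x i) {a b : α} (h : σ.SameCycle a b) : x a = x b := by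
  obtain ⟨n, rfl⟩ := h.exists_nat_pow_eq
  clear h
  induction n with
  | zero => rfl
  | succ n ih => rw [pow_succ', mul_apply, hx, ih]

theorem sameCycle_out_mk (σ : Perm α) (x : α) :
    σ.SameCycle (Quotient.mk (SameCycle.setoid σ) x).out x :=
  Quotient.mk_out (s := SameCycle.setoid σ) x

variable [Fintype α] [DecidableEq α] (σ : Perm α)

theorem filter_sameCycle_of_mem_support {x : α} (hx : x ∈ σ.support) :
    ({y | σ.SameCycle x y} : Finset α) = (σ.cycleOf x).support := by
  ext y
  simp only [mem_filter, mem_univ, true_and, mem_support_cycleOf_iff, hx, and_true]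

theorem filter_sameCycle_of_notMem_support {x : α} (hx : x ∉ σ.support) :
    ({y | σ.SameCycle x y} : Finset α) = {x} := by
  ext y
  simp only [mem_filter, mem_univ, true_and, mem_singleton]
  exact ⟨fun h => (h.eq_of_left (notMem_support.mp hx)).symm, fun h => h ▸ SameCycle.refl σ x⟩

-- The cycles of `σ` inside its support are the cycle factors; the remaining ones are singletons.
theorem prod_card_sameCycle_classes [Fintype (Quotient (SameCycle.setoid σ))]
    [DecidableEq (Quotient (SameCycle.setoid σ))] {M : Type*} [CommMonoid M] (g : ℕ → M) :
    ∏ q : Quotient (SameCycle.setoid σ), g #{x | Quotient.mk _ x = q} =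
      (σ.partition.parts.map g).prod := by
  have fiber_eq (q : Quotient (SameCycle.setoid σ)) :
      ({x | Quotient.mk _ x = q} : Finset α) = ({x | σ.SameCycle q.out x} : Finset α) := by
    ext x
    simp only [mem_filter, mem_univ, true_and, Quotient.mk_eq_iff_out]
    exact ⟨SameCycle.symm, SameCycle.symm⟩
  rw [parts_partition, Multiset.map_add, Multiset.prod_add, cycleType_def, Multiset.map_map,
    Multiset.map_replicate, Multiset.prod_replicate, ← card_compl, ← prod_const,
    ← prod_filter_mul_prod_filter_not univ (fun q => q.out ∈ σ.support)]
  congr 1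
  · refine prod_nbij (fun q => σ.cycleOf q.out) (fun q hq => ?_) (fun q hq q' _ h => ?_)
      (fun c hc => ?_) (fun q hq => ?_)
    · exact cycleOf_mem_cycleFactorsFinset_iff.mpr (mem_filter.mp hq).2
    · have h' : q.out ∈ (σ.cycleOf q'.out).support := by
        rw [← show σ.cycleOf q.out = σ.cycleOf q'.out from h]
        exact mem_support_cycleOf_iff.mpr ⟨SameCycle.refl _ _, (mem_filter.mp hq).2⟩
      rw [← q.out_eq, ← q'.out_eq, Quotient.eq]
      exact (mem_support_cycleOf_iff.mp h').1.symm
    · obtain ⟨x, hx⟩ := (mem_cycleFactorsFinset_iff.mp hc).1.nonempty_support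
      have hxσ : x ∈ σ.support := mem_cycleFactorsFinset_support_le hc hx
      refine ⟨Quotient.mk _ x, mem_filter.mpr ⟨mem_univ _, ?_⟩, ?_⟩
      · exact (sameCycle_out_mk σ x).mem_support_iff.mpr hxσ
      · rw [cycle_is_cycleOf hx hc]
        exact (sameCycle_out_mk σ x).cycleOf_eq
    · simp only [Function.comp_apply, fiber_eq,
        filter_sameCycle_of_mem_support σ (mem_filter.mp hq).2]
  · refine prod_nbij' (fun q => q.out) (Quotient.mk _) (fun q hq => ?_) (fun x hx => ?_)
      (fun q _ => q.out_eq) (fun x hx => ?_) (fun q hq => ?_)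
    · exact mem_compl.mpr (mem_filter.mp hq).2
    · refine mem_filter.mpr ⟨mem_univ _, fun h => mem_compl.mp hx ?_⟩
      exact (sameCycle_out_mk σ x).mem_support_iff.mp h
    · exact (sameCycle_out_mk σ x).eq_of_right (notMem_support.mp (mem_compl.mp hx))
    · rw [fiber_eq, filter_sameCycle_of_notMem_support σ (mem_filter.mp hq).2, card_singleton]

theorem sum_invariant_prod_eq_prod_map_parts {D R : Type*} [Fintype D] [DecidableEq D] [CommSemiring R]
    (f : D → R) :
    ∑ x : α → D with ∀ i, x (σ i) = x i, ∏ i, f (x i) =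
      (σ.partition.parts.map fun m => ∑ y, f y ^ m).prod := by
  classical
  let mk := Quotient.mk (SameCycle.setoid σ)
  have invariant_eq_image :
      ({x : α → D | ∀ i, x (σ i) = x i} : Finset _) = univ.image (· ∘ mk) := by
    ext x
    simp only [mem_filter, mem_univ, true_and, mem_image]
    constructor
    · intro hx
      exact ⟨Quotient.lift x fun _ _ => SameCycle.apply_eq_of_invariant hx, rfl⟩
    · rintro ⟨g, rfl⟩ i
      exact congrArg g (Quotient.sound (sameCycle_apply_left.mpr (SameCycle.refl σ i)))
  rw [invariant_eq_image, sum_image (Quotient.mk_surjective.injective_comp_right.injOn)]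
  exact (sum_prod_comp_eq_prod_sum_pow_card_fiber mk f).trans
    (prod_card_sameCycle_classes σ fun m => ∑ y, f y ^ m)

theorem sign_eq_neg_one_pow_card_sub_card_parts :
    sign σ = (-1) ^ (Fintype.card α - Multiset.card σ.partition.parts) := by
  have two_mul_card_le : 2 * Multiset.card σ.cycleType ≤ #σ.support := by
    rw [← sum_cycleType]
    simpa [mul_comm] using Multiset.card_nsmul_le_sum fun _ hn => two_le_of_mem_cycleType hn
  have card_support_le : #σ.support ≤ Fintype.card α := card_le_univ _
  have card_sub : Fintype.card α - Multiset.card σ.partition.parts =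
      #σ.support - Multiset.card σ.cycleType := by
    rw [parts_partition, Multiset.card_add, Multiset.card_replicate]
    omega
  rw [sign_of_cycleType, sum_cycleType, card_sub,
    show #σ.support + Multiset.card σ.cycleType =
      #σ.support - Multiset.card σ.cycleType + 2 * Multiset.card σ.cycleType by omega,
    pow_add, pow_mul, neg_one_sq, one_pow, mul_one]

theorem sum_sign_invariant_eq_ite_injective {D : Type*} [DecidableEq D] (x : α → D) :
    ∑ σ : Perm α with ∀ i, x (σ i) = x i, (sign σ : ℤ) = if Injective x then 1 else 0 := by
  split_ifs with hx
  · have : ({σ : Perm α | ∀ i, x (σ i) = x i} : Finset _) = {1} := by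
      ext σ
      simp only [mem_filter, mem_univ, true_and, mem_singleton]
      exact ⟨fun h => Perm.ext fun i => hx (h i), fun h i => h ▸ rfl⟩
    simp [this]
  obtain ⟨a, b, hab, hne⟩ := not_injective_iff.mp hx
  have swap_invariant (i : α) : x (swap a b i) = x i := by
    rw [swap_apply_def]
    split_ifs with hia hib
    · rw [hia, hab]
    · rw [hib, hab]
    · rfl
  refine sum_involution (fun σ _ => swap a b * σ) (fun σ _ => ?_) (fun σ _ _ h => hne ?_)
    (fun σ hσ => ?_) (fun σ _ => swap_mul_self_mul a b σ)
  · simp [sign_mul, sign_swap hne]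
  · exact swap_eq_one_iff.mp (mul_eq_right.mp h)
  · simp only [mem_filter, mem_univ, true_and, mul_apply, swap_invariant] at hσ ⊢
    exact hσ

theorem sum_injective_prod_eq_sum_perm {D R : Type*} [Fintype D] [DecidableEq D] [CommRing R]
    (f : D → R) :
    ∑ x : α → D with Injective x, ∏ i, f (x i) =
      ∑ σ : Perm α, (-1) ^ (Fintype.card α - Multiset.card σ.partition.parts) *
        (σ.partition.parts.map fun m => ∑ y, f y ^ m).prod := by
  calc ∑ x : α → D with Injective x, ∏ i, f (x i)
      = ∑ x : α → D, ∑ σ : Perm α with ∀ i, x (σ i) = x i, (sign σ : R) * ∏ i, f (x i) := by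
        rw [sum_filter]
        refine sum_congr rfl fun x _ => ?_
        rw [← sum_mul, ← Int.cast_sum, sum_sign_invariant_eq_ite_injective]
        split_ifs <;> simp
    _ = ∑ σ : Perm α, (sign σ : R) * ∑ x : α → D with ∀ i, x (σ i) = x i, ∏ i, f (x i) := by
        simp_rw [sum_filter, mul_sum, mul_ite, mul_zero]
        exact sum_comm
    _ = _ := by
        simp_rw [sum_invariant_prod_eq_prod_map_parts, sign_eq_neg_one_pow_card_sub_card_parts]
        push_cast
        rfl

end Equiv.Perm

theorem fullCycleType_eq_parts_partition {k : ℕ} (σ : Perm (Fin k)) :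
    fullCycleType σ = σ.partition.parts := by
  rw [Perm.parts_partition, Fintype.card_fin]
  rfl

def permPartition {k : ℕ} (σ : Perm (Fin k)) : k.Partition where
  parts := fullCycleType σ
  parts_pos := by
    rw [fullCycleType_eq_parts_partition]
    exact σ.partition.parts_pos
  parts_sum := by
    rw [fullCycleType_eq_parts_partition, σ.partition.parts_sum, Fintype.card_fin]

theorem permCountOfType_eq_card {k : ℕ} (P : k.Partition) :
    permCountOfType P = #{σ : Perm (Fin k) | permPartition σ = P} := by
  rw [permCountOfType, Nat.card_eq_fintype_card, Fintype.card_subtype]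
  simp only [Nat.Partition.ext_iff, permPartition]

theorem distinct_tuple_power_sum_expansion_general {D : Type*} [Fintype D] [DecidableEq D]
    (k : ℕ) (f : D → ℂ) :
    ∑ x ∈ (Finset.univ.filter (fun x : Fin k → D => Function.Injective x)),
        ∏ i, f (x i) =
      ∑ P : Nat.Partition k,
        (-1 : ℂ) ^ (k - Multiset.card P.parts) * (permCountOfType P : ℂ) *
          (P.parts.map (fun p => ∑ y : D, f y ^ p)).prod := by
  rw [Perm.sum_injective_prod_eq_sum_perm, ← sum_fiberwise univ permPartition]
  refine sum_congr rfl fun P _ => ?_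
  have on_fiber : ∀ σ ∈ ({σ | permPartition σ = P} : Finset (Perm (Fin k))),
      (-1 : ℂ) ^ (Fintype.card (Fin k) - Multiset.card σ.partition.parts) *
          (σ.partition.parts.map fun m => ∑ y, f y ^ m).prod =
        (-1) ^ (k - Multiset.card P.parts) * (P.parts.map fun m => ∑ y, f y ^ m).prod := by
    intro σ hσ
    rw [← (mem_filter.mp hσ).2, ← fullCycleType_eq_parts_partition, Fintype.card_fin]
    rfl
  rw [sum_congr rfl on_fiber, sum_const, permCountOfType_eq_card, nsmul_eq_mul]
  ring

/-- Power-sum expansion of the distinct-coordinates sum: for `f : D → ℂ`,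
`∑_{x ∈ D^k, coords distinct} f(x_1)⋯f(x_k) = ∑_{∑ i·c_i = k} (-1)^{k - ∑ c_i}
N(c_1, …, c_k) ∏_i (∑_{x ∈ D} f(x)^i)^{c_i}`. -/
theorem distinct_tuple_power_sum_expansion {D : Type*} [Fintype D] [DecidableEq D]
    (k : ℕ) (hk : 1 ≤ k) (f : D → ℂ) :
    ∑ x ∈ (Finset.univ.filter (fun x : Fin k → D => Function.Injective x)),
        ∏ i, f (x i) =
      ∑ P : Nat.Partition k,
        (-1 : ℂ) ^ (k - Multiset.card P.parts) * (permCountOfType P : ℂ) *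
          (P.parts.map (fun p => ∑ y : D, f y ^ p)).prod :=
  distinct_tuple_power_sum_expansion_general k f
end

section
/- Let q be a prime power, a ∈ F_q^*, n ≥ 2, and suppose that for every nontrivial additive character ψ of F_q, |∑_{y ∈ V} ψ(y)| ≤ (n+1)√q where V = {D_n(x,a) : x ∈ F_q}. Let k ≥ 1 with |V| ≥ k+1, and suppose (1/q)·|V|(|V|-1)···(|V|-k) > ((n+1)√q/2 + k + |V|/2)(( n+1)√q/2 + k + |V|/2 - 1)···((n+1)√q/2 + k + |V|/2 - k). Then for every b ∈ F_q there exist pairwise distinct y_1,...,y_{k+1} ∈ V with y_1 + ... + y_{k+1} = b. -/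
/-!
Fix a primitive additive character `ψ` of `F_q` and write `e_m(x)` for the `m`-th elementary
symmetric function of the unit complex numbers `ψ(x y)`, `y ∈ V`. Orthogonality of characters gives
`q · #{S ⊆ V : |S| = k + 1, ∑ S = b} = C(|V|, k + 1) + ∑_{x ≠ 0} ψ(-x b) e_{k+1}(x)`.
For `x ≠ 0` the first power sum of the `ψ(x y)` has modulus at most `u = (n + 1)√q` by hypothesis,
and every power sum has modulus at most `v = |V|`. Newton's identities turn this into a recursion
for `|e_m|`, which together with `|e_m| ≤ C(v, m)` yields `m! |e_m| ≤ B (B + 1) ⋯ (B + m - 1)` with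
`B = (u + v) / 2` (the Li–Wan bound). The hypothesis on falling factorials then makes the error
term smaller than the main term, so the count is positive.
-/

open Finset Nat

theorem mul_sum_prod_range_add_div_factorial (B : ℝ) (t : ℕ) :
    B * ∑ j ∈ range t, (∏ i ∈ range j, (B + i)) / j ! = t * (∏ i ∈ range t, (B + i)) / t ! := by
  induction t with
  | zero => simp
  | succ t ih =>
    rw [sum_range_succ, mul_add, ih, prod_range_succ, factorial_succ]
    push_cast
    field_simp
    ring

theorem cast_descFactorial_le_prod_range_add {v m : ℕ} {B : ℝ} (hm : m ≤ v)
    (hB : (v : ℝ) + 1 ≤ B + m) : (v.descFactorial m : ℝ) ≤ ∏ i ∈ range m, (B + i) := by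
  have hv : v = (v + 1 - m) + m - 1 := by omega
  rw [hv, add_descFactorial_eq_ascFactorial', ascFactorial_eq_prod_range]
  push_cast
  refine prod_le_prod (fun i _ => by positivity) fun i _ => ?_
  rw [Nat.cast_sub (by omega)]
  push_cast
  linarith

theorem prod_range_natCast_sub_eq_factorial_mul_choose (v m : ℕ) :
    ∏ j ∈ range m, ((v : ℝ) - j) = m ! * v.choose m := by
  rw [prod_range_natCast_sub, ← descFactorial_eq_prod_range, descFactorial_eq_factorial_mul_choose]
  push_cast
  rfl

theorem prod_range_add_sub_eq_prod_range_add (c : ℝ) (k : ℕ) :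
    ∏ j ∈ range (k + 1), (c + k - j) = ∏ i ∈ range (k + 1), (c + i) := by
  rw [← prod_range_reflect]
  refine prod_congr rfl fun j hj => ?_
  rw [Nat.cast_sub (by simp at hj; omega)]
  push_cast
  ring

theorem mul_factorial_le_prod_of_newton_bound {u : ℝ} {v : ℕ} (hu : 0 ≤ u) (huv : u ≤ v)
    {E : ℕ → ℝ} (hE0 : E 0 = 1)
    (hnewton : ∀ t : ℕ, (t + 1) * E (t + 1) ≤ u * E t + v * ∑ j ∈ range t, E j)
    (hchoose : ∀ j, E j ≤ v.choose j) {m : ℕ} (hm : m ≤ v) :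
    E m * m ! ≤ ∏ i ∈ range m, ((u + v) / 2 + i) := by
  set B := (u + v) / 2 with hB
  induction m using Nat.strong_induction_on with
  | _ m ih =>
  rcases m with _ | t
  · simp [hE0]
  -- While `m - 1 ≤ B` the Newton recursion closes the induction, as `u B + v t ≤ B (B + t)`;
  -- beyond that point the trivial bound `E m ≤ C(v, m)` is already good enough.
  by_cases ht : (t : ℝ) ≤ B
  · have hBpos : 0 < B := by
      have : (1 : ℝ) ≤ v := by exact_mod_cast (by omega : 1 ≤ v)
      linarith
    have hR : 0 ≤ ∏ i ∈ range t, (B + i) := prod_nonneg fun i _ => by positivity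
    have hEt : E t * t ! ≤ ∏ i ∈ range t, (B + i) := ih t (by omega) (by omega)
    have hsum : ∑ j ∈ range t, E j ≤ ∑ j ∈ range t, (∏ i ∈ range j, (B + i)) / j ! :=
      sum_le_sum fun j hj => by
        rw [le_div_iff₀ (by positivity)]
        exact ih j (by simp at hj; omega) (by simp at hj; omega)
    have hstep : u * B + v * t ≤ B * (B + t) := by
      nlinarith [mul_nonneg (sub_nonneg.2 huv) (sub_nonneg.2 ht)]
    have hhockey : t ! * (B * ∑ j ∈ range t, (∏ i ∈ range j, (B + i)) / j !) =
        t * ∏ i ∈ range t, (B + i) := by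
      rw [mul_sum_prod_range_add_div_factorial]
      field_simp
    refine le_of_mul_le_mul_left ?_ hBpos
    calc B * (E (t + 1) * (t + 1) !)
        = B * t ! * ((t + 1) * E (t + 1)) := by push_cast [factorial_succ]; ring
      _ ≤ B * t ! * (u * E t + v * ∑ j ∈ range t, E j) :=
          mul_le_mul_of_nonneg_left (hnewton t) (by positivity)
      _ ≤ u * B * (E t * t !) +
            v * (t ! * (B * ∑ j ∈ range t, (∏ i ∈ range j, (B + i)) / j !)) := by
          nlinarith [mul_le_mul_of_nonneg_left hsum (by positivity : (0 : ℝ) ≤ B * t ! * v)]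
      _ ≤ u * B * ∏ i ∈ range t, (B + i) + v * (t * ∏ i ∈ range t, (B + i)) := by
          rw [hhockey]
          gcongr
      _ ≤ B * (B + t) * ∏ i ∈ range t, (B + i) := by nlinarith
      _ = B * ∏ i ∈ range (t + 1), (B + i) := by rw [prod_range_succ]; ring
  · rw [not_le] at ht
    calc E (t + 1) * (t + 1) ! ≤ v.choose (t + 1) * (t + 1) ! :=
          mul_le_mul_of_nonneg_right (hchoose _) (by positivity)
      _ = v.descFactorial (t + 1) := by rw [descFactorial_eq_factorial_mul_choose]; push_cast; ring
      _ ≤ ∏ i ∈ range (t + 1), (B + i) :=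
          cast_descFactorial_le_prod_range_add hm (by push_cast; linarith)

section ElementarySymmetric

variable {𝕜 σ : Type*} [RCLike 𝕜] [Fintype σ]

theorem norm_esymm_le_choose {z : σ → 𝕜} (hz : ∀ i, ‖z i‖ ≤ 1) (j : ℕ) :
    ‖(univ.val.map z).esymm j‖ ≤ (Fintype.card σ).choose j := by
  rw [Finset.esymm_map_val]
  refine (norm_sum_le _ _).trans ?_
  calc ∑ S ∈ powersetCard j univ, ‖∏ i ∈ S, z i‖ ≤ ∑ S ∈ powersetCard j (univ : Finset σ), 1 :=
        sum_le_sum fun S _ => by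
          rw [norm_prod]; exact prod_le_one (fun _ _ => norm_nonneg _) fun i _ => hz i
    _ = (Fintype.card σ).choose j := by simp

theorem norm_sum_pow_le_card {z : σ → 𝕜} (hz : ∀ i, ‖z i‖ ≤ 1) (d : ℕ) :
    ‖∑ i, z i ^ d‖ ≤ Fintype.card σ := by
  refine (norm_sum_le _ _).trans ?_
  simpa using sum_le_sum fun i (_ : i ∈ univ) =>
    (norm_pow (z i) d).trans_le (pow_le_one₀ (norm_nonneg _) (hz i))

theorem succ_mul_norm_esymm_succ_le {z : σ → 𝕜} (hz : ∀ i, ‖z i‖ ≤ 1) (t : ℕ) :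
    (t + 1) * ‖(univ.val.map z).esymm (t + 1)‖ ≤ ‖∑ i, z i‖ * ‖(univ.val.map z).esymm t‖ +
      Fintype.card σ * ∑ j ∈ range t, ‖(univ.val.map z).esymm j‖ := by
  classical
  have newton := congrArg (MvPolynomial.aeval z) (MvPolynomial.mul_esymm_eq_sum σ 𝕜 (t + 1))
  simp only [map_mul, map_sum, map_pow, map_neg, map_one, map_natCast,
    MvPolynomial.aeval_esymm_eq_multiset_esymm, MvPolynomial.psum, MvPolynomial.aeval_X] at newton
  rw [sum_filter, Finset.Nat.sum_antidiagonal_eq_sum_range_succ_mk, sum_range_succ,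
    if_neg (lt_irrefl _), add_zero, sum_congr rfl fun j hj => if_pos (mem_range.mp hj),
    sum_range_succ] at newton
  simp only [Nat.add_sub_cancel_left, pow_one] at newton
  calc (t + 1) * ‖(univ.val.map z).esymm (t + 1)‖
      = ‖((t + 1 : ℕ) : 𝕜) * (univ.val.map z).esymm (t + 1)‖ := by
        rw [norm_mul, RCLike.norm_natCast]; push_cast; rfl
    _ ≤ ∑ j ∈ range t, ‖(univ.val.map z).esymm j‖ * ‖∑ i, z i ^ (t + 1 - j)‖ +
          ‖(univ.val.map z).esymm t‖ * ‖∑ i, z i‖ := by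
        rw [newton, norm_mul, norm_pow, norm_neg, norm_one, one_pow, one_mul]
        refine (norm_add_le _ _).trans (add_le_add ((norm_sum_le _ _).trans_eq ?_) ?_)
        · simp [norm_mul]
        · simp [norm_mul]
    _ ≤ _ := by
        rw [add_comm, mul_comm ‖_‖ ‖_‖, mul_sum]
        refine add_le_add le_rfl (sum_le_sum fun j _ => ?_)
        rw [mul_comm]
        exact mul_le_mul_of_nonneg_right (norm_sum_pow_le_card hz _) (norm_nonneg _)

theorem norm_esymm_mul_factorial_le {z : σ → 𝕜} (hz : ∀ i, ‖z i‖ ≤ 1) {u : ℝ}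
    (hu : ‖∑ i, z i‖ ≤ u) {m : ℕ} (hm : m ≤ Fintype.card σ) :
    ‖(univ.val.map z).esymm m‖ * m ! ≤ ∏ i ∈ range m, ((u + Fintype.card σ) / 2 + i) := by
  set v := Fintype.card σ
  have hsum : ‖∑ i, z i‖ ≤ min u v := le_min hu (by simpa using norm_sum_pow_le_card hz 1)
  refine (mul_factorial_le_prod_of_newton_bound ((norm_nonneg _).trans hsum) (min_le_right u v)
      (E := fun j => ‖(univ.val.map z).esymm j‖) (by simp [Finset.esymm_map_val]) (fun t => ?_)
      (norm_esymm_le_choose hz) hm).trans ?_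
  · exact (succ_mul_norm_esymm_succ_le hz t).trans
      (add_le_add_left (mul_le_mul_of_nonneg_right hsum (norm_nonneg _)) _)
  · refine prod_le_prod (fun i _ => ?_) fun i _ => ?_
    · have := (norm_nonneg _).trans hsum
      positivity
    · gcongr
      exact min_le_left u v

end ElementarySymmetric

theorem AddChar.map_sum_eq_prod {A M ι : Type*} [AddCommMonoid A] [CommMonoid M]
    (ψ : AddChar A M) (s : Finset ι) (g : ι → A) : ψ (∑ i ∈ s, g i) = ∏ i ∈ s, ψ (g i) := by
  classical
  induction s using Finset.induction_on with
  | empty => simp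
  | insert i s hi ih => rw [sum_insert hi, prod_insert hi, map_add_eq_mul, ih]

section Orthogonality

variable {σ F : Type*} [Fintype σ] [Field F] [Fintype F] {ψ : AddChar F ℂ}
  (f : σ → F) (m : ℕ) (b : F)

theorem card_mul_card_filter_sum_eq_sum_esymm [DecidableEq F] (hψ : ψ.IsPrimitive) :
    (Fintype.card F : ℂ) * #{S ∈ powersetCard m univ | ∑ i ∈ S, f i = b} =
      ∑ x : F, ψ (-(x * b)) * (univ.val.map fun i => ψ (x * f i)).esymm m := by
  have hS (S : Finset σ) : ∑ x : F, ψ (x * (∑ i ∈ S, f i - b)) =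
      if ∑ i ∈ S, f i = b then (Fintype.card F : ℂ) else 0 := by
    rw [AddChar.sum_mulShift _ hψ]
    simp [sub_eq_zero]
  calc (Fintype.card F : ℂ) * #{S ∈ powersetCard m univ | ∑ i ∈ S, f i = b}
      = ∑ S ∈ powersetCard m univ, ∑ x : F, ψ (x * (∑ i ∈ S, f i - b)) := by
        simp_rw [hS, sum_ite, sum_const_zero, add_zero, sum_const, nsmul_eq_mul, mul_comm]
    _ = ∑ x : F, ∑ S ∈ powersetCard m univ, ψ (-(x * b)) * ∏ i ∈ S, ψ (x * f i) := by
        rw [sum_comm]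
        refine sum_congr rfl fun x _ => sum_congr rfl fun S _ => ?_
        rw [mul_sub, sub_eq_neg_add, AddChar.map_add_eq_mul, mul_sum, AddChar.map_sum_eq_prod]
    _ = _ := by simp_rw [Finset.esymm_map_val, mul_sum]

theorem exists_card_eq_sum_eq_of_norm_esymm_le (hψ : ψ.IsPrimitive) {W : ℝ}
    (hW : ∀ x ≠ 0, ‖(univ.val.map fun i => ψ (x * f i)).esymm m‖ ≤ W)
    (hlt : ((Fintype.card F : ℝ) - 1) * W < (Fintype.card σ).choose m) :
    ∃ S : Finset σ, S.card = m ∧ ∑ i ∈ S, f i = b := by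
  classical
  by_contra! h
  have hzero := card_mul_card_filter_sum_eq_sum_esymm f m b hψ
  rw [filter_false_of_mem fun S hS => h S (mem_powersetCard.1 hS).2, card_empty, Nat.cast_zero,
    mul_zero, ← add_sum_erase _ _ (mem_univ 0)] at hzero
  have h0 : ψ (-(0 * b)) * (univ.val.map fun i => ψ (0 * f i)).esymm m =
      (Fintype.card σ).choose m := by
    rw [Finset.esymm_map_val]
    simp
  rw [h0] at hzero
  refine hlt.not_ge ?_
  calc ((Fintype.card σ).choose m : ℝ)
      = ‖∑ x ∈ univ.erase 0, ψ (-(x * b)) * (univ.val.map fun i => ψ (x * f i)).esymm m‖ := by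
        rw [← norm_neg, ← eq_neg_of_add_eq_zero_left hzero.symm, Complex.norm_natCast]
    _ ≤ ∑ x ∈ univ.erase 0, W := norm_sum_le_of_le _ fun x hx => by
        rw [norm_mul, AddChar.norm_apply, one_mul]
        exact hW x (ne_of_mem_erase hx)
    _ = ((Fintype.card F : ℝ) - 1) * W := by
        rw [sum_const, card_erase_of_mem (mem_univ _), Finset.card_univ, nsmul_eq_mul,
          Nat.cast_sub Fintype.card_pos, Nat.cast_one]

end Orthogonality

theorem Finset.exists_injective_fin_sum_eq {ι M : Type*} [AddCommMonoid M] {S : Finset ι}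
    {m : ℕ} (hS : S.card = m) (f : ι → M) :
    ∃ y : Fin m → ι, Function.Injective y ∧ ∑ i, f (y i) = ∑ i ∈ S, f i := by
  subst hS
  exact ⟨fun i => S.equivFin.symm i, Subtype.val_injective.comp S.equivFin.symm.injective,
    (Equiv.sum_comp S.equivFin.symm fun i => f i).trans (sum_coe_sort S f)⟩

theorem dickson_value_set_subset_sum_general {F : Type*} [Field F] [Fintype F]
    (n : ℕ) (k : ℕ)
    (V : Finset F)
    (hVcard : k + 1 ≤ V.card)
    (hchar : ∀ ψ : AddChar F ℂ, ψ ≠ 1 →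
      ‖∑ y ∈ V, ψ y‖ ≤ (n + 1 : ℝ) * Real.sqrt (Fintype.card F))
    (hineq : (1 / (Fintype.card F : ℝ)) * ∏ j ∈ Finset.range (k + 1), ((V.card : ℝ) - j) >
      ∏ j ∈ Finset.range (k + 1),
        ((n + 1 : ℝ) * Real.sqrt (Fintype.card F) / 2 + k + (V.card : ℝ) / 2 - j)) :
    ∀ b : F, ∃ y : Fin (k + 1) → F, Function.Injective y ∧ (∀ i, y i ∈ V) ∧
      ∑ i, y i = b := by
  intro b
  set q := Fintype.card F
  set M : ℝ := (n + 1 : ℝ) * Real.sqrt q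
  set W : ℝ := ∏ i ∈ range (k + 1), ((M + V.card) / 2 + i)
  set ψ := AddChar.FiniteField.primitiveChar_to_Complex F
  have hψ : ψ.IsPrimitive := AddChar.FiniteField.primitiveChar_to_Complex_isPrimitive F
  have hesymm (x : F) (hx : x ≠ 0) :
      ‖(univ.val.map fun y : V => ψ (x * y)).esymm (k + 1)‖ ≤ W / (k + 1)! := by
    have hsum : ‖∑ y : V, ψ (x * y)‖ ≤ M := by
      rw [sum_coe_sort V fun y => ψ (x * y)]
      exact hchar _ (hψ hx)
    rw [le_div_iff₀ (by positivity)]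
    simpa using norm_esymm_mul_factorial_le (fun y => (ψ.norm_apply _).le) hsum
      (by simpa using hVcard)
  have hlt : ((q : ℝ) - 1) * (W / (k + 1)!) < (Fintype.card V).choose (k + 1) := by
    have hq : (0 : ℝ) < q := by exact_mod_cast Fintype.card_pos
    have hW0 : 0 ≤ W := prod_nonneg fun i _ => by positivity
    have hW : ∏ j ∈ range (k + 1), (M / 2 + k + V.card / 2 - j) = W :=
      (prod_congr rfl fun j _ => by ring).trans (prod_range_add_sub_eq_prod_range_add _ k)
    rw [hW, prod_range_natCast_sub_eq_factorial_mul_choose, gt_iff_lt, one_div, inv_mul_eq_div,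
      lt_div_iff₀ hq] at hineq
    rw [Fintype.card_coe, mul_div_assoc', div_lt_iff₀ (by positivity)]
    nlinarith
  obtain ⟨S, hS, hSsum⟩ :=
    exists_card_eq_sum_eq_of_norm_esymm_le (fun y : V => (y : F)) (k + 1) b hψ hesymm hlt
  obtain ⟨y, hy, hysum⟩ := exists_injective_fin_sum_eq hS (fun y : V => (y : F))
  exact ⟨fun i => y i, Subtype.val_injective.comp hy, fun i => (y i).2, hysum.trans hSsum⟩

/-- Main theorem (counting form): let `V = {D_n(x, a) : x ∈ F_q}` be the value set of
the Dickson polynomial (`a ≠ 0`, `n ≥ 2`).  If every nontrivial additive character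
`ψ` of `F_q` satisfies `|∑_{y ∈ V} ψ(y)| ≤ (n+1)√q`, `|V| ≥ k + 1`, and
`(1/q)·|V|(|V|-1)⋯(|V|-k) > ((n+1)√q/2 + k + |V|/2)_{k+1}`, then for every `b ∈ F_q`
there are pairwise distinct `y_1, …, y_{k+1} ∈ V` with `y_1 + ⋯ + y_{k+1} = b`. -/
theorem dickson_value_set_subset_sum {F : Type*} [Field F] [Fintype F] [DecidableEq F]
    (a : F) (ha : a ≠ 0) (n : ℕ) (hn : 2 ≤ n) (k : ℕ) (hk : 1 ≤ k)
    (V : Finset F)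
    (hV : V = Finset.univ.image (fun x => (Polynomial.dickson 1 a n).eval x))
    (hVcard : k + 1 ≤ V.card)
    (hchar : ∀ ψ : AddChar F ℂ, ψ ≠ 1 →
      ‖∑ y ∈ V, ψ y‖ ≤ (n + 1 : ℝ) * Real.sqrt (Fintype.card F))
    (hineq : (1 / (Fintype.card F : ℝ)) * ∏ j ∈ Finset.range (k + 1), ((V.card : ℝ) - j) >
      ∏ j ∈ Finset.range (k + 1),
        ((n + 1 : ℝ) * Real.sqrt (Fintype.card F) / 2 + k + (V.card : ℝ) / 2 - j)) :
    ∀ b : F, ∃ y : Fin (k + 1) → F, Function.Injective y ∧ (∀ i, y i ∈ V) ∧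
      ∑ i, y i = b :=
  dickson_value_set_subset_sum_general n k V hVcard hchar hineq
end
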